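/- arXiv:1302.6160 — 3 statements merged into one kernel-verified Lean document; each statement's English description precedes it below -/
import Mathlib

section
/- Let v : [T₀, ∞) → (0, ∞) be continuous with ∫_{T₀}^∞ v(t) dt = +∞, and suppose ∫_{T₀}^r v(t) dt ≤ C r^a for all r ≥ r₀ and some positive constants C, r₀, a. Then for every λ > 0 the ODE (v(t) x'(t))' + λ v(t) x(t) = 0 is oscillatory on [T₀, ∞): every nontrivial solution has infinitely many zeros; in particular there exist T₁ < T₂ in [T₀, ∞) with x(T₁) = x(T₂) = 0 and x ≠ 0 on (T₁, T₂). -/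
open MeasureTheory intervalIntegral Set Filter Topology

private lemma monoOn_of_hasDerivAt {f f' : ℝ → ℝ} {s : Set ℝ} (hs : Convex ℝ s)
    (hd : ∀ t ∈ s, HasDerivAt f (f' t) t) (h0 : ∀ t ∈ s, 0 ≤ f' t) : MonotoneOn f s := by
  refine monotoneOn_of_deriv_nonneg hs (fun t ht => (hd t ht).continuousAt.continuousWithinAt)
    (fun t ht => ((hd t (interior_subset ht)).differentiableAt).differentiableWithinAt) ?_
  intro t ht; rw [(hd t (interior_subset ht)).deriv]; exact h0 t (interior_subset ht)

private lemma antiOn_of_hasDerivAt {f f' : ℝ → ℝ} {s : Set ℝ} (hs : Convex ℝ s)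
    (hd : ∀ t ∈ s, HasDerivAt f (f' t) t) (h0 : ∀ t ∈ s, f' t ≤ 0) : AntitoneOn f s := by
  refine antitoneOn_of_deriv_nonpos hs (fun t ht => (hd t ht).continuousAt.continuousWithinAt)
    (fun t ht => ((hd t (interior_subset ht)).differentiableAt).differentiableWithinAt) ?_
  intro t ht; rw [(hd t (interior_subset ht)).deriv]; exact h0 t (interior_subset ht)

private lemma strictMonoOn_of_hasDerivAt' {f f' : ℝ → ℝ} {s : Set ℝ} (hs : Convex ℝ s)
    (hc : ContinuousOn f s)
    (hd : ∀ t ∈ interior s, HasDerivAt f (f' t) t) (h0 : ∀ t ∈ interior s, 0 < f' t) :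
    StrictMonoOn f s := by
  refine strictMonoOn_of_deriv_pos hs hc ?_
  intro t ht; rw [(hd t ht).deriv]; exact h0 t ht

private lemma strictAntiOn_of_hasDerivAt' {f f' : ℝ → ℝ} {s : Set ℝ} (hs : Convex ℝ s)
    (hc : ContinuousOn f s)
    (hd : ∀ t ∈ interior s, HasDerivAt f (f' t) t) (h0 : ∀ t ∈ interior s, f' t < 0) :
    StrictAntiOn f s := by
  refine strictAntiOn_of_deriv_neg hs hc ?_
  intro t ht; rw [(hd t ht).deriv]; exact h0 t ht

private lemma ftc_hasDerivAt {g : ℝ → ℝ} (hg : Continuous g) (a t : ℝ) :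
    HasDerivAt (fun r => ∫ s in a..r, g s) (g t) t :=
  intervalIntegral.integral_hasDerivAt_right (hg.intervalIntegrable a t)
    (hg.aestronglyMeasurable.stronglyMeasurableAtFilter) hg.continuousAt

private lemma V_tendsto_atTop {T₀ : ℝ} {v vt : ℝ → ℝ} (hvt : Continuous vt)
    (hpos : ∀ t, 0 < vt t) (heq : ∀ t ≥ T₀, vt t = v t)
    (hdiv : ¬ IntegrableOn v (Set.Ici T₀)) :
    Tendsto (fun t => ∫ s in T₀..t, vt s) atTop atTop := by
  set V := fun t => ∫ s in T₀..t, vt s with hV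
  have hmono : Monotone V := by
    have := monoOn_of_hasDerivAt (f := V) (f' := vt) convex_univ
      (fun t _ => ftc_hasDerivAt hvt T₀ t) (fun t _ => (hpos t).le)
    exact monotoneOn_univ.mp this
  by_contra hnot
  have : ∃ b, ∀ a, V a < b := by
    by_contra hb
    push_neg at hb
    exact hnot (tendsto_atTop_atTop_of_monotone hmono (by
      intro b; obtain ⟨a, ha⟩ := hb b; exact ⟨a, ha⟩))
  obtain ⟨b, hb⟩ := this
  have hfi : ∀ i : ℝ, IntegrableOn v (Ioc T₀ i) := by
    intro i
    have h1 : IntegrableOn vt (Ioc T₀ i) :=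
      (hvt.integrableOn_Icc).mono_set Ioc_subset_Icc_self
    exact h1.congr_fun (fun t ht => heq t ht.1.le) measurableSet_Ioc
  have hI : IntegrableOn v (Set.Ioi T₀) := by
    refine MeasureTheory.integrableOn_Ioi_of_intervalIntegral_norm_bounded b T₀ hfi
      (tendsto_id (α := ℝ)) ?_
    filter_upwards [eventually_ge_atTop T₀] with i hi
    have : (∫ x in T₀..i, ‖v x‖) = V i := by
      refine intervalIntegral.integral_congr ?_
      intro t ht
      rw [uIcc_of_le hi] at ht
      have : v t = vt t := (heq t ht.1).symm
      simp only [this, Real.norm_eq_abs, abs_of_pos (hpos t)]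
    rw [this]; exact (hb i).le
  exact hdiv (by rwa [integrableOn_Ici_iff_integrableOn_Ioi])

set_option maxHeartbeats 1000000 in
private lemma keyA
    (T₀ C r₀ a : ℝ) (hC : 0 < C) (hr₀ : 0 < r₀) (ha : 0 < a)
    (v : ℝ → ℝ) (hv_cont : ContinuousOn v (Set.Ici T₀))
    (hv_pos : ∀ t ≥ T₀, 0 < v t)
    (hv_div : ¬ IntegrableOn v (Set.Ici T₀))
    (hv_growth : ∀ r ≥ r₀, (∫ t in T₀..r, v t) ≤ C * r ^ a)
    (lam : ℝ) (hlam : 0 < lam)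
    (x x' : ℝ → ℝ)
    (hderiv : ∀ t ≥ T₀, HasDerivAt x (x' t) t)
    (hode : ∀ t ≥ T₀, HasDerivAt (fun s => v s * x' s) (-(lam * v t * x t)) t)
    (T : ℝ) (hT : T₀ < T) (hx : ∀ t ≥ T, 0 < x t) : False := by
  -- extension of v
  set vt : ℝ → ℝ := fun t => v (max t T₀) with hvt_def
  have hvtc : Continuous vt := by
    have hcm : Continuous (fun t : ℝ => max t T₀) := continuous_id.max continuous_const
    exact hv_cont.comp_continuous hcm (fun t => le_max_right t T₀)
  have hvtpos : ∀ t, 0 < vt t := fun t => hv_pos _ (le_max_right t T₀)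
  have hvteq : ∀ t ≥ T₀, vt t = v t := fun t ht => by
    simp only [hvt_def, max_eq_left ht]
  -- V
  set V : ℝ → ℝ := fun t => ∫ s in T₀..t, vt s with hV_def
  have hVd : ∀ t, HasDerivAt V (vt t) t := fun t => ftc_hasDerivAt hvtc T₀ t
  have hVmono : StrictMono V := by
    have := strictMonoOn_of_hasDerivAt' (f := V) (f' := vt) convex_univ
      (fun t _ => (hVd t).continuousAt.continuousWithinAt) (fun t _ => hVd t)
      (fun t _ => hvtpos t)
    exact strictMonoOn_univ.mp this
  have hVtop : Tendsto V atTop atTop := V_tendsto_atTop hvtc hvtpos hvteq hv_div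
  have hV0 : V T₀ = 0 := intervalIntegral.integral_same
  have hVgrow : ∀ r, max r₀ T₀ ≤ r → V r ≤ C * r ^ a := by
    intro r hr
    have h1 : V r = ∫ t in T₀..r, v t := by
      refine intervalIntegral.integral_congr ?_
      intro t ht
      rw [uIcc_of_le (le_trans (le_max_right _ _) hr)] at ht
      exact hvteq t ht.1
    rw [h1]; exact hv_growth r (le_trans (le_max_left _ _) hr)
  -- Riccati function w
  have hTT₀ : T₀ ≤ T := hT.le
  set w : ℝ → ℝ := fun t => v t * x' t / x t with hw_def
  have hwd : ∀ t, T ≤ t → HasDerivAt w (-(lam * vt t) - (w t)^2 / vt t) t := by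
    intro t ht
    have ht₀ : T₀ ≤ t := le_trans hTT₀ ht
    have hxt : x t ≠ 0 := (hx t ht).ne'
    have h := (hode t ht₀).div (hderiv t ht₀) hxt
    refine h.congr_deriv ?_
    rw [hvteq t ht₀]
    have hvt0 : v t ≠ 0 := (hv_pos t ht₀).ne'
    simp only [hw_def]
    field_simp
  -- w + lam V is antitone on [T, ∞)
  have hfanti : AntitoneOn (fun t => w t + lam * V t) (Ici T) := by
    refine antiOn_of_hasDerivAt (f' := fun t => -((w t)^2 / vt t)) (convex_Ici T)
      (fun t ht => by
        have h := (hwd t ht).add ((hVd t).const_mul lam)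
        exact h.congr_deriv (by ring))
      (fun t _ => neg_nonpos.mpr (div_nonneg (sq_nonneg _) (hvtpos t).le))
  have hwanti : ∀ s t, T ≤ s → s ≤ t → w t ≤ w s := by
    intro s t hs hst
    have h1 := hfanti hs (hs.trans hst) hst
    have h2 := mul_le_mul_of_nonneg_left (hVmono.monotone hst) hlam.le
    simp only at h1
    linarith
  -- choice of T₁ with w T₁ < -1
  obtain ⟨T₁, hT₁V, hT₁gt⟩ :
      ∃ T₁, (w T + lam * V T + 1) / lam < V T₁ ∧ T < T₁ :=
    ((hVtop.eventually (eventually_gt_atTop _)).and (eventually_gt_atTop T)).exists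
  have hwT₁ : w T₁ < -1 := by
    have h1 := hfanti (self_mem_Ici) (mem_Ici.mpr hT₁gt.le) hT₁gt.le
    simp only at h1
    have h2 : w T + lam * V T + 1 < lam * V T₁ := by
      rw [div_lt_iff₀ hlam] at hT₁V; linarith
    linarith
  have hTT₁ : T ≤ T₁ := hT₁gt.le
  have hwneg : ∀ t, T₁ ≤ t → w t < 0 := fun t ht =>
    lt_of_le_of_lt (hwanti T₁ t hTT₁ ht) (by linarith)
  -- u = -1/w
  set u : ℝ → ℝ := fun t => -(w t)⁻¹ with hu_def
  have hupos : ∀ t, T₁ ≤ t → 0 < u t := fun t ht => by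
    simp only [hu_def]
    exact neg_pos.mpr (inv_lt_zero.mpr (hwneg t ht))
  have hud : ∀ t, T₁ ≤ t → HasDerivAt u (-(lam * vt t * (u t)^2) - (vt t)⁻¹) t := by
    intro t ht
    have h1 := ((hwd t (hTT₁.trans ht)).inv (hwneg t ht).ne).neg
    refine h1.congr_deriv ?_
    have hv0 : vt t ≠ 0 := (hvtpos t).ne'
    have hw0 : w t ≠ 0 := (hwneg t ht).ne
    simp only [hu_def]
    field_simp
  -- (u)⁻¹ - lam V is monotone on [T₁, ∞)
  have hUgmono : MonotoneOn (fun t => (u t)⁻¹ - lam * V t) (Ici T₁) := by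
    refine monoOn_of_hasDerivAt (f' := fun t => (vt t)⁻¹ / (u t)^2) (convex_Ici T₁)
      (fun t ht => by
        have h := ((hud t ht).inv (hupos t ht).ne').sub ((hVd t).const_mul lam)
        refine h.congr_deriv ?_
        have hv0 : vt t ≠ 0 := (hvtpos t).ne'
        have hu0 : u t ≠ 0 := (hupos t ht).ne'
        field_simp
        ring)
      (fun t ht => div_nonneg (inv_nonneg.mpr (hvtpos t).le) (sq_nonneg _))
  have huV : ∀ t, T₁ ≤ t → lam * (V t - V T₁) < (u t)⁻¹ := by
    intro t ht
    have h1 := hUgmono self_mem_Ici (mem_Ici.mpr ht) ht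
    simp only at h1
    have h0 : 0 < (u T₁)⁻¹ := inv_pos.mpr (hupos T₁ le_rfl)
    rw [mul_sub]
    linarith
  have hu_lt : ∀ s, T₁ ≤ s → 0 < V s - V T₁ → u s < (lam * (V s - V T₁))⁻¹ := by
    intro s hs hW
    have h1 := huV s hs
    have h2 := hupos s hs
    have h3 : 0 < lam * (V s - V T₁) := by positivity
    rw [← inv_inv (u s)]
    exact inv_strictAnti₀ h3 h1
  -- U = ∫ 1/vt from T₁
  have hvtinvc : Continuous fun t => (vt t)⁻¹ := hvtc.inv₀ fun t => (hvtpos t).ne'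
  set U : ℝ → ℝ := fun t => ∫ s in T₁..t, (vt s)⁻¹ with hU_def
  have hUd : ∀ t, HasDerivAt U ((vt t)⁻¹) t := fun t => ftc_hasDerivAt hvtinvc T₁ t
  have hpanti : AntitoneOn (fun t => u t + U t) (Ici T₁) := by
    refine antiOn_of_hasDerivAt (f' := fun t => -(lam * vt t * (u t)^2)) (convex_Ici T₁)
      (fun t ht => by
        have h := (hud t ht).add (hUd t)
        exact h.congr_deriv (by ring))
      (fun t _ => neg_nonpos.mpr (mul_nonneg (mul_nonneg hlam.le (hvtpos t).le) (sq_nonneg _)))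
  have hUu : ∀ s t, T₁ ≤ s → s ≤ t → U t - U s ≤ u s := by
    intro s t hs hst
    have h1 := hpanti (mem_Ici.mpr hs) (mem_Ici.mpr (hs.trans hst)) hst
    simp only at h1
    have h2 := hupos t (hs.trans hst)
    linarith
  -- AM-GM integral inequality
  have hAM : ∀ s t (ε : ℝ), s ≤ t → 0 < ε →
      t - s ≤ ε * (V t - V s) + (4*ε)⁻¹ * (U t - U s) := by
    intro s t ε hst hε
    have hVint : V t - V s = ∫ r in s..t, vt r := by
      have h := intervalIntegral.integral_add_adjacent_intervals (μ := volume)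
        (hvtc.intervalIntegrable T₀ s) (hvtc.intervalIntegrable s t)
      show (∫ r in T₀..t, vt r) - (∫ r in T₀..s, vt r) = _
      linarith [h]
    have hUint : U t - U s = ∫ r in s..t, (vt r)⁻¹ := by
      have h := intervalIntegral.integral_add_adjacent_intervals (μ := volume)
        (hvtinvc.intervalIntegrable T₁ s) (hvtinvc.intervalIntegrable s t)
      show (∫ r in T₁..t, (vt r)⁻¹) - (∫ r in T₁..s, (vt r)⁻¹) = _
      linarith [h]
    have h1 : t - s = ∫ _r in s..t, (1:ℝ) := by simp
    rw [h1, hVint, hUint, ← intervalIntegral.integral_const_mul,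
      ← intervalIntegral.integral_const_mul,
      ← intervalIntegral.integral_add (f := fun r => ε * vt r) (g := fun r => (4*ε)⁻¹ * (vt r)⁻¹) ((continuous_const.mul hvtc).intervalIntegrable s t)
        ((continuous_const.mul hvtinvc).intervalIntegrable s t)]
    refine intervalIntegral.integral_mono_on hst (_root_.intervalIntegrable_const (c := (1:ℝ)))
      (((continuous_const.mul hvtc).add (continuous_const.mul hvtinvc)).intervalIntegrable s t) ?_
    intro r _
    have hv := hvtpos r
    have key : ε * vt r + (4*ε)⁻¹ * (vt r)⁻¹ - 1 = (2*ε*vt r - 1)^2 / (4*ε*vt r) := by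
      field_simp
      ring
    have h2 : (0:ℝ) ≤ (2*ε*vt r - 1)^2 / (4*ε*vt r) :=
      div_nonneg (sq_nonneg _) (by positivity)
    linarith
  -- step length
  set h : ℝ := 2 / Real.sqrt lam with hh_def
  have hsqrt : 0 < Real.sqrt lam := Real.sqrt_pos.mpr hlam
  have hhpos : 0 < h := by positivity
  have hh2 : lam * h ^ 2 = 4 := by
    rw [hh_def, div_pow, Real.sq_sqrt hlam.le]
    field_simp
    norm_num
  have hVT₁pos : 0 < V T₁ := by
    have := hVmono (lt_trans hT hT₁gt)
    linarith [hV0]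
  -- doubling step
  have hstep : ∀ s, T₁ < s → 2 * V T₁ ≤ V s → 2 * V s ≤ V (s + h) := by
    intro s hs hVs
    have hApos : 0 < V (s + h) := by
      have h1 : T₀ < s + h := by linarith [hT, hT₁gt]
      have := hVmono h1
      linarith [hV0]
    set A := V (s + h) with hA_def
    have hWpos : 0 < V s - V T₁ := by linarith
    set W : ℝ := V s - V T₁ with hW_def
    set ε : ℝ := h / (2 * A) with hε_def
    have hεpos : 0 < ε := by positivity
    have h1 := hAM s (s + h) ε (by linarith) hεpos
    have h2 : ε * (V (s+h) - V s) ≤ ε * A := by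
      have h0 : 0 ≤ V s := by linarith
      have : V (s+h) - V s ≤ A := by rw [← hA_def]; linarith
      nlinarith
    have h3 : U (s + h) - U s ≤ u s := hUu s (s + h) hs.le (by linarith)
    have h4 : u s < (lam * W)⁻¹ := hu_lt s hs.le hWpos
    have hc2 : (4*ε)⁻¹ * (U (s+h) - U s) ≤ (4*ε)⁻¹ * (lam * W)⁻¹ := by
      have hi : 0 < (4*ε)⁻¹ := by positivity
      exact mul_le_mul_of_nonneg_left (le_trans h3 h4.le) hi.le
    have hAne : A ≠ 0 := hApos.ne'
    have hhne : h ≠ 0 := hhpos.ne'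
    have hεA : ε * A = h / 2 := by
      rw [hε_def]; field_simp
    have hinv : (4*ε)⁻¹ = A / (2*h) := by
      rw [hε_def, show 4*(h/(2*A)) = (2*h)/A by field_simp; ring, inv_div]
    have h6 : h ≤ h/2 + (A/(2*h)) * (lam * W)⁻¹ := by
      have := h1
      rw [show s + h - s = h by ring] at this
      calc h ≤ ε * (V (s+h) - V s) + (4*ε)⁻¹ * (U (s+h) - U s) := this
        _ ≤ ε*A + (4*ε)⁻¹ * (lam*W)⁻¹ := by linarith
        _ = h/2 + (A/(2*h)) * (lam*W)⁻¹ := by rw [hεA, hinv]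
    have hlamW : (0:ℝ) < lam * W := by positivity
    have hd : h/2 ≤ A/(2*h) * (lam * W)⁻¹ := by linarith
    have e1 : A/(2*h) * (lam*W)⁻¹ = A / (2*h*(lam*W)) := by
      rw [eq_div_iff (by positivity : (2*h*(lam*W)) ≠ 0)]
      field_simp
    have hd' : h * (2*h*(lam*W)) ≤ A * 2 := by
      rw [e1, div_le_div_iff₀ two_pos (by positivity)] at hd
      linarith
    have h7 : lam * h^2 * W ≤ A := by linarith
    have h8 : 4 * W ≤ A := by rw [← hh2]; linarith
    linarith
  -- choose s₀
  obtain ⟨s₀, ⟨hs₀T₁, hs₀V⟩, hs₀r, hs₀1⟩ :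
      ∃ s₀, (T₁ < s₀ ∧ 2 * V T₁ ≤ V s₀) ∧ (max r₀ T₀ ≤ s₀ ∧ 1 ≤ s₀) :=
    (((eventually_gt_atTop T₁).and (hVtop.eventually (eventually_ge_atTop _))).and
      ((eventually_ge_atTop _).and (eventually_ge_atTop 1))).exists
  have hVs₀pos : 0 < V s₀ := by linarith
  -- exponential growth of V by induction
  have hind : ∀ n : ℕ, 2^n * V s₀ ≤ V (s₀ + n * h) := by
    intro n
    induction n with
    | zero => simp
    | succ n ih =>
      have hnh : (0:ℝ) ≤ (n:ℝ) * h := by positivity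
      have hsT₁ : T₁ < s₀ + n * h := by linarith
      have hVmono' : V s₀ ≤ V (s₀ + n * h) := hVmono.monotone (by linarith)
      have h2n : (1:ℝ) ≤ 2^n := one_le_pow₀ (by norm_num)
      have hVs : 2 * V T₁ ≤ V (s₀ + n * h) := by linarith
      have hst := hstep (s₀ + n * h) hsT₁ hVs
      have heq : s₀ + (n:ℝ) * h + h = s₀ + ((n:ℕ) + 1 : ℕ) * h := by push_cast; ring
      rw [heq] at hst
      have h2n' : (2:ℝ)^(n+1) = 2 * 2^n := by ring
      rw [h2n']
      linarith
  -- final contradiction via polynomial growth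
  set m : ℕ := ⌈a⌉₊ with hm_def
  have ham : a ≤ (m:ℝ) := Nat.le_ceil a
  set K : ℝ := (s₀ + h)^m with hK_def
  have hs₀pos : 0 < s₀ := by linarith
  have hKpos : 0 < K := by positivity
  have hbound : ∀ n : ℕ, 1 ≤ n → 2^n * V s₀ ≤ C * K * (2^m * (n:ℝ)^m) := by
    intro n hn
    have hn1 : (1:ℝ) ≤ (n:ℝ) := by exact_mod_cast hn
    have hnh : (0:ℝ) ≤ (n:ℝ) * h := by positivity
    have hsn : max r₀ T₀ ≤ s₀ + n*h := le_trans hs₀r (by linarith)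
    have h1 : V (s₀ + n*h) ≤ C * (s₀+n*h) ^ a := hVgrow _ hsn
    have hbase1 : (1:ℝ) ≤ s₀ + n*h := by linarith
    have h2 : (s₀+n*h) ^ a ≤ (s₀+n*h) ^ ((m:ℕ):ℝ) :=
      Real.rpow_le_rpow_of_exponent_le hbase1 ham
    have h3 : (s₀+n*h) ^ ((m:ℕ):ℝ) = (s₀+n*h)^(m:ℕ) := Real.rpow_natCast _ m
    have h4 : (s₀+n*h)^(m:ℕ) ≤ ((s₀+h)*(2*(n:ℝ)))^(m:ℕ) := by
      refine pow_le_pow_left₀ (by linarith) (by nlinarith) m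
    have h5 : ((s₀+h)*(2*(n:ℝ)))^(m:ℕ) = K * (2^m * (n:ℝ)^m) := by
      rw [hK_def, mul_pow, mul_pow]; try ring
    calc 2^n * V s₀ ≤ V (s₀+n*h) := hind n
      _ ≤ C * (s₀+n*h) ^ a := h1
      _ ≤ C * ((s₀+n*h) ^ ((m:ℕ):ℝ)) := mul_le_mul_of_nonneg_left h2 hC.le
      _ = C * ((s₀+n*h)^(m:ℕ)) := by rw [h3]
      _ ≤ C * (((s₀+h)*(2*(n:ℝ)))^(m:ℕ)) := mul_le_mul_of_nonneg_left h4 hC.le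
      _ = C * K * (2^m * (n:ℝ)^m) := by rw [h5]; ring
  have hlim := tendsto_pow_const_div_const_pow_of_one_lt m (by norm_num : (1:ℝ) < 2)
  have hδ : (0:ℝ) < V s₀ / (C * K * 2^m) := by positivity
  obtain ⟨n, hn1, hn2⟩ : ∃ n : ℕ, 1 ≤ n ∧ ((n:ℝ)^m / 2^n < V s₀ / (C*K*2^m)) :=
    ((eventually_ge_atTop 1).and (hlim.eventually_lt_const hδ)).exists
  have hb := hbound n hn1
  rw [div_lt_div_iff₀ (by positivity) (by positivity)] at hn2
  nlinarith [hn2, hb]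

private lemma keyB
    (T₀ C r₀ a : ℝ) (hC : 0 < C) (hr₀ : 0 < r₀) (ha : 0 < a)
    (v : ℝ → ℝ) (hv_cont : ContinuousOn v (Set.Ici T₀))
    (hv_pos : ∀ t ≥ T₀, 0 < v t)
    (hv_div : ¬ IntegrableOn v (Set.Ici T₀))
    (hv_growth : ∀ r ≥ r₀, (∫ t in T₀..r, v t) ≤ C * r ^ a)
    (lam : ℝ) (hlam : 0 < lam)
    (x x' : ℝ → ℝ)
    (hderiv : ∀ t ≥ T₀, HasDerivAt x (x' t) t)
    (hode : ∀ t ≥ T₀, HasDerivAt (fun s => v s * x' s) (-(lam * v t * x t)) t) :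
    ∀ T ≥ T₀, ∃ t ≥ T, x t = 0 := by
  intro T hT
  by_contra hno
  push_neg at hno
  set T' : ℝ := T + 1 with hT'
  have hT'0 : T₀ < T' := by simp only [hT']; linarith
  have hT'T : T ≤ T' := by simp only [hT']; linarith
  have hcont : ∀ b, ContinuousOn x (Icc T' b) := fun b r hr =>
    ((hderiv r (by linarith [hr.1, hT'0.le])).continuousAt).continuousWithinAt
  have hsign : (∀ t ≥ T', 0 < x t) ∨ (∀ t ≥ T', 0 < -x t) := by
    rcases lt_trichotomy (x T') 0 with hneg | h0 | hpos
    · right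
      intro t ht
      rcases lt_trichotomy (x t) 0 with h | h | h
      · linarith
      · exact absurd h (hno t (le_trans hT'T ht))
      · obtain ⟨c, hc, hc0⟩ := intermediate_value_Icc ht (hcont t) ⟨hneg.le, h.le⟩
        exact absurd hc0 (hno c (le_trans hT'T hc.1))
    · exact absurd h0 (hno T' hT'T)
    · left
      intro t ht
      rcases lt_trichotomy (x t) 0 with h | h | h
      · obtain ⟨c, hc, hc0⟩ := intermediate_value_Icc' ht (hcont t) ⟨h.le, hpos.le⟩
        exact absurd hc0 (hno c (le_trans hT'T hc.1))
      · exact absurd h (hno t (le_trans hT'T ht))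
      · exact h
  rcases hsign with hpos | hneg
  · exact keyA T₀ C r₀ a hC hr₀ ha v hv_cont hv_pos hv_div hv_growth lam hlam
      x x' hderiv hode T' hT'0 hpos
  · refine keyA T₀ C r₀ a hC hr₀ ha v hv_cont hv_pos hv_div hv_growth lam hlam
      (fun s => -x s) (fun s => -x' s) (fun t ht => (hderiv t ht).neg)
      (fun t ht => ?_) T' hT'0 hneg
    simpa only [mul_neg, neg_neg, Pi.neg_def] using (hode t ht).neg

private lemma keyC
    (T₀ : ℝ) (v : ℝ → ℝ)
    (hv_pos : ∀ t ≥ T₀, 0 < v t)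
    (lam : ℝ) (hlam : 0 < lam)
    (x x' : ℝ → ℝ)
    (hderiv : ∀ t ≥ T₀, HasDerivAt x (x' t) t)
    (hode : ∀ t ≥ T₀, HasDerivAt (fun s => v s * x' s) (-(lam * v t * x t)) t)
    (hz : ∀ T ≥ T₀, ∃ t ≥ T, x t = 0)
    (t₀ : ℝ) (ht₀ : T₀ ≤ t₀) (hx₀ : 0 < x t₀) :
    ∃ T₁ T₂, T₀ ≤ T₁ ∧ T₁ < T₂ ∧ x T₁ = 0 ∧ x T₂ = 0 ∧
      ∀ t ∈ Set.Ioo T₁ T₂, x t ≠ 0 := by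
  have hxc : ∀ t, T₀ ≤ t → ContinuousAt x t := fun t ht => (hderiv t ht).continuousAt
  set xe : ℝ → ℝ := fun t => x (max t T₀) with hxe_def
  have hxec : Continuous xe := by
    rw [continuous_iff_continuousAt]
    intro t
    have h1 : ContinuousAt (fun t : ℝ => max t T₀) t :=
      (continuous_id.max continuous_const).continuousAt
    exact ContinuousAt.comp (f := fun s : ℝ => max s T₀)
      (hxc _ (le_max_right t T₀)) h1
  have hxee : ∀ t, T₀ ≤ t → xe t = x t := fun t ht => by
    simp only [hxe_def, max_eq_left ht]
  -- first zero after a non-zero point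
  have hfz : ∀ c, T₀ ≤ c → x c ≠ 0 →
      ∃ z, c < z ∧ x z = 0 ∧ ∀ t, c ≤ t → t < z → x t ≠ 0 := by
    intro c hc hxc0
    set Z : Set ℝ := Ici c ∩ xe ⁻¹' {0} with hZ
    have hZc : IsClosed Z := isClosed_Ici.inter (isClosed_singleton.preimage hxec)
    have hZne : Z.Nonempty := by
      obtain ⟨z, hz1, hz2⟩ := hz c hc
      exact ⟨z, hz1, by simp [Set.mem_preimage, hxee z (hc.trans hz1), hz2]⟩
    have hZbd : BddBelow Z := ⟨c, fun z hzz => hzz.1⟩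
    have hzZ : sInf Z ∈ Z := hZc.csInf_mem hZne hZbd
    set z := sInf Z with hz_def
    have hzc : c ≤ z := hzZ.1
    have hxz : x z = 0 := by
      have h2 := hzZ.2
      simp only [Set.mem_preimage, Set.mem_singleton_iff] at h2
      rwa [hxee z (hc.trans hzc)] at h2
    have hzne : c ≠ z := fun h => hxc0 (h ▸ hxz)
    refine ⟨z, lt_of_le_of_ne hzc hzne, hxz, ?_⟩
    intro t hct htz h0
    have htZ : t ∈ Z := ⟨hct, by
      simp only [Set.mem_preimage, Set.mem_singleton_iff]
      rw [hxee t (hc.trans hct)]; exact h0⟩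
    have := csInf_le hZbd htZ
    linarith
  obtain ⟨s₂, hs₂gt, hxs₂, hmin⟩ := hfz t₀ ht₀ hx₀.ne'
  have hs₂0 : T₀ ≤ s₂ := le_trans ht₀ hs₂gt.le
  have hpos : ∀ t, t₀ ≤ t → t < s₂ → 0 < x t := by
    intro t h1 h2
    rcases lt_trichotomy (x t) 0 with h | h | h
    · obtain ⟨c, hc, hc0⟩ := intermediate_value_Icc' h1
        (fun r hr => (hxc r (le_trans ht₀ hr.1)).continuousWithinAt) ⟨h.le, hx₀.le⟩
      exact absurd hc0 (hmin c hc.1 (lt_of_le_of_lt hc.2 h2))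
    · exact absurd h (hmin t h1 h2)
    · exact h
  have hd := hderiv s₂ hs₂0
  have hx'le : x' s₂ ≤ 0 := by
    have hslope := hasDerivAt_iff_tendsto_slope.mp hd
    have h2 : Tendsto (slope x s₂) (𝓝[<] s₂) (𝓝 (x' s₂)) :=
      hslope.mono_left (nhdsWithin_mono _ (fun y hy => ne_of_lt hy))
    refine le_of_tendsto h2 ?_
    filter_upwards [Ioo_mem_nhdsLT_of_mem (⟨hs₂gt, le_refl s₂⟩ : s₂ ∈ Ioc t₀ s₂)] with t ht
    have hxt : 0 < x t := hpos t ht.1.le ht.2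
    have hsl : slope x s₂ t = x t / (t - s₂) := by
      rw [slope_def_field, hxs₂, sub_zero]
    rw [hsl]
    exact div_nonpos_of_nonneg_of_nonpos hxt.le (by linarith [ht.2])
  have hx'neg : x' s₂ < 0 := by
    rcases lt_or_eq_of_le hx'le with h | h
    · exact h
    · exfalso
      have hys₂ : v s₂ * x' s₂ = 0 := by rw [h, mul_zero]
      have ht₀s₂ : t₀ ≤ s₂ := hs₂gt.le
      have hyanti : StrictAntiOn (fun s => v s * x' s) (Icc t₀ s₂) := by
        refine strictAntiOn_of_hasDerivAt'
          (f' := fun t => -(lam * v t * x t)) (convex_Icc t₀ s₂)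
          (fun r hr => ((hode r (le_trans ht₀ hr.1)).continuousAt).continuousWithinAt)
          (fun r hr => ?_) (fun r hr => ?_)
        · rw [interior_Icc] at hr
          exact hode r (le_trans ht₀ hr.1.le)
        · rw [interior_Icc] at hr
          have hxr : 0 < x r := hpos r hr.1.le hr.2
          have hvr : 0 < v r := hv_pos r (le_trans ht₀ hr.1.le)
          have : 0 < lam * v r * x r := by positivity
          show -(lam * v r * x r) < 0
          linarith
      have hxmono : StrictMonoOn x (Icc t₀ s₂) := by
        refine strictMonoOn_of_hasDerivAt' (f' := x') (convex_Icc t₀ s₂)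
          (fun r hr => ((hderiv r (le_trans ht₀ hr.1)).continuousAt).continuousWithinAt)
          (fun r hr => ?_) (fun r hr => ?_)
        · rw [interior_Icc] at hr
          exact hderiv r (le_trans ht₀ hr.1.le)
        · rw [interior_Icc] at hr
          have hyr0 := hyanti ⟨hr.1.le, hr.2.le⟩ ⟨ht₀s₂, le_rfl⟩ hr.2
          have hyr : 0 < v r * x' r := by simpa [hys₂] using hyr0
          have hvr : 0 < v r := hv_pos r (le_trans ht₀ hr.1.le)
          nlinarith
      have := hxmono ⟨le_rfl, ht₀s₂⟩ ⟨ht₀s₂, le_rfl⟩ hs₂gt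
      rw [hxs₂] at this
      linarith
  -- x is negative just to the right of s₂
  obtain ⟨t₁, ht₁gt, ht₁neg⟩ :
      ∃ t₁, s₂ < t₁ ∧ ∀ t, s₂ < t → t ≤ t₁ → x t < 0 := by
    have hslope := hasDerivAt_iff_tendsto_slope.mp hd
    have h2 : Tendsto (slope x s₂) (𝓝[>] s₂) (𝓝 (x' s₂)) :=
      hslope.mono_left (nhdsWithin_mono _ (fun y hy => ne_of_gt hy))
    have hev : ∀ᶠ t in 𝓝[>] s₂, slope x s₂ t < 0 := h2.eventually_lt_const hx'neg
    obtain ⟨u, hu, hsub⟩ := mem_nhdsGT_iff_exists_Ioc_subset.mp hev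
    refine ⟨u, hu, ?_⟩
    intro t h1 h2'
    have hsl := hsub (⟨h1, h2'⟩ : t ∈ Ioc s₂ u)
    simp only [Set.mem_setOf_eq] at hsl
    have heq : slope x s₂ t = x t / (t - s₂) := by
      rw [slope_def_field, hxs₂, sub_zero]
    rw [heq] at hsl
    have htpos : 0 < t - s₂ := by linarith
    by_contra hge
    push_neg at hge
    exact absurd hsl (not_lt.mpr (div_nonneg hge htpos.le))
  have hxt₁ : x t₁ ≠ 0 := (ht₁neg t₁ ht₁gt le_rfl).ne
  obtain ⟨τ, hτgt, hxτ, hτmin⟩ := hfz t₁ (le_trans hs₂0 ht₁gt.le) hxt₁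
  refine ⟨s₂, τ, hs₂0, lt_trans ht₁gt hτgt, hxs₂, hxτ, ?_⟩
  intro t ht h0
  rcases le_or_gt t t₁ with hcase | hcase
  · exact (ht₁neg t ht.1 hcase).ne h0
  · exact hτmin t hcase.le ht.2 h0


/-- Let `v : [T₀,∞) → (0,∞)` be continuous with `∫_{T₀}^∞ v(t) dt = +∞`
(i.e. `v` not integrable on `[T₀,∞)`), and suppose `∫_{T₀}^r v(t) dt ≤ C rᵃ` for all
`r ≥ r₀` and positive constants `C, r₀, a`.  Then for every `λ > 0` the ODE
`(v(t) x'(t))' + λ v(t) x(t) = 0` is oscillatory on `[T₀,∞)`: every nontrivial solution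
has zeros beyond any given time; in particular there exist consecutive zeros
`T₁ < T₂` in `[T₀,∞)` with `x(T₁) = x(T₂) = 0` and `x ≠ 0` on `(T₁, T₂)`. -/
theorem stmt_3
    (T₀ C r₀ a : ℝ) (hC : 0 < C) (hr₀ : 0 < r₀) (ha : 0 < a)
    (v : ℝ → ℝ) (hv_cont : ContinuousOn v (Set.Ici T₀))
    (hv_pos : ∀ t ≥ T₀, 0 < v t)
    (hv_div : ¬ IntegrableOn v (Set.Ici T₀))
    (hv_growth : ∀ r ≥ r₀, (∫ t in T₀..r, v t) ≤ C * r ^ a)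
    (lam : ℝ) (hlam : 0 < lam)
    (x x' : ℝ → ℝ)
    (hderiv : ∀ t ≥ T₀, HasDerivAt x (x' t) t)
    (hode : ∀ t ≥ T₀, HasDerivAt (fun s => v s * x' s) (-(lam * v t * x t)) t)
    (hnontriv : ∃ t ≥ T₀, x t ≠ 0) :
    (∀ T ≥ T₀, ∃ t ≥ T, x t = 0) ∧
    (∃ T₁ T₂, T₀ ≤ T₁ ∧ T₁ < T₂ ∧ x T₁ = 0 ∧ x T₂ = 0 ∧
      ∀ t ∈ Set.Ioo T₁ T₂, x t ≠ 0) := by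
  have hz := keyB T₀ C r₀ a hC hr₀ ha v hv_cont hv_pos hv_div hv_growth lam hlam
    x x' hderiv hode
  refine ⟨hz, ?_⟩
  obtain ⟨t₀, ht₀, hx0⟩ := hnontriv
  rcases lt_or_gt_of_ne hx0 with hneg | hpos
  · have hz' : ∀ T ≥ T₀, ∃ t ≥ T, -x t = 0 := by
      intro T hT
      obtain ⟨t, h1, h2⟩ := hz T hT
      exact ⟨t, h1, by rw [h2, neg_zero]⟩
    obtain ⟨T₁, T₂, h1, h2, h3, h4, h5⟩ := keyC T₀ v hv_pos lam hlam
      (fun s => -x s) (fun s => -x' s)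
      (fun t ht => (hderiv t ht).neg)
      (fun t ht => by simpa only [mul_neg, neg_neg, Pi.neg_def] using (hode t ht).neg)
      hz' t₀ ht₀ (by simpa using hneg)
    refine ⟨T₁, T₂, h1, h2, ?_, ?_, ?_⟩
    · simpa using h3
    · simpa using h4
    · intro t ht h0
      exact h5 t ht (by rw [h0, neg_zero])
  · exact keyC T₀ v hv_pos lam hlam x x' hderiv hode hz t₀ ht₀ hpos
end

section
/- Let Σ be a complete non-compact weighted Riemannian manifold and q a continuous nonnegative function on Σ. Assume (i) 1/vol_f(∂B_r(o)) ∉ L¹(+∞), and (ii) q ∉ L¹(Σ, e^{-f} dvol). Then for every compact subset Ω ⊂ Σ, the bottom of the spectrum of the Schrödinger operator L = −Δ_f − q on Σ \ Ω is negative: λ_1^L(Σ \ Ω) < 0. -/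
open MeasureTheory intervalIntegral


lemma psiDeriv_cont : Continuous (deriv Real.smoothTransition) :=
  (Real.smoothTransition.contDiff (n := 1)).continuous_deriv le_rfl

lemma psiDeriv_nonpos {x : ℝ} (hx : x ≤ 0) : deriv Real.smoothTransition x = 0 := by
  have h1 : Set.EqOn (deriv Real.smoothTransition) 0 (Set.Iio 0) := by
    intro y hy
    have he : Real.smoothTransition =ᶠ[nhds y] fun _ => (0 : ℝ) :=
      Filter.eventuallyEq_of_mem (Iio_mem_nhds hy) fun z hz =>
        Real.smoothTransition.zero_of_nonpos hz.le
    simpa using he.deriv_eq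
  have h2 := h1.closure psiDeriv_cont continuous_const
  rw [closure_Iio] at h2
  exact h2 hx

lemma psiDeriv_one_le {x : ℝ} (hx : 1 ≤ x) : deriv Real.smoothTransition x = 0 := by
  have h1 : Set.EqOn (deriv Real.smoothTransition) 0 (Set.Ioi 1) := by
    intro y hy
    have he : Real.smoothTransition =ᶠ[nhds y] fun _ => (1 : ℝ) :=
      Filter.eventuallyEq_of_mem (Ioi_mem_nhds hy) fun z hz =>
        Real.smoothTransition.one_of_one_le hz.le
    simpa using he.deriv_eq
  have h2 := h1.closure psiDeriv_cont continuous_const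
  rw [closure_Ioi] at h2
  exact h2 hx

lemma psi_sq_integral (A B : ℝ) (hA : A ≤ 0) (hB : 1 ≤ B) :
    (∫ s in A..B, (deriv Real.smoothTransition s) ^ 2)
      = ∫ s in (0:ℝ)..1, (deriv Real.smoothTransition s) ^ 2 := by
  have hi : ∀ p q : ℝ,
      IntervalIntegrable (fun s => (deriv Real.smoothTransition s) ^ 2) volume p q :=
    fun p q => (psiDeriv_cont.pow 2).intervalIntegrable p q
  have e1 := intervalIntegral.integral_add_adjacent_intervals (hi A 0) (hi 0 B)
  have e2 := intervalIntegral.integral_add_adjacent_intervals (hi 0 1) (hi 1 B)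
  have z1 : (∫ s in A..(0:ℝ), (deriv Real.smoothTransition s) ^ 2) = 0 := by
    have he : Set.EqOn (fun s => (deriv Real.smoothTransition s) ^ 2)
        (fun _ => (0:ℝ)) (Set.uIcc A 0) := by
      intro x hx
      rw [Set.uIcc_of_le hA] at hx
      simp [psiDeriv_nonpos hx.2]
    rw [intervalIntegral.integral_congr he]
    simp
  have z2 : (∫ s in (1:ℝ)..B, (deriv Real.smoothTransition s) ^ 2) = 0 := by
    have he : Set.EqOn (fun s => (deriv Real.smoothTransition s) ^ 2)
        (fun _ => (0:ℝ)) (Set.uIcc 1 B) := by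
      intro x hx
      rw [Set.uIcc_of_le hB] at hx
      simp [psiDeriv_one_le hx.1]
    rw [intervalIntegral.integral_congr he]
    simp
  linarith

/-- Let `Σ` be a complete non-compact weighted manifold and `q ≥ 0` a
continuous function on `Σ`.  Radial abstraction as before: `v t = vol_f(∂B_t(o))` and
`Q t = (1/v(t)) ∫_{∂B_t} q e^{-f}` is the weighted spherical average of `q`, so that the
hypotheses (i) `1/vol_f(∂B_r) ∉ L¹(+∞)` and (ii) `q ∉ L¹(Σ, e^{-f}dvol)` read
`1/v ∉ L¹(+∞)` and `Q·v ∉ L¹(+∞)` (coarea).  Let `Ω` be a compact set contained in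
`B_T` and `lam1 = λ₁^L(Σ \ Ω)` the bottom of the spectrum of the Schrödinger operator
`L = −Δ_f − q` on `Σ \ Ω`, which is bounded above by the weighted Rayleigh quotient of
every radial test function supported outside `B_T` (hypothesis `hlam_upper`; for radial
`g ∘ r` the quadratic form of `L` equals the one-dimensional form with weight `v` and
potential `Q`).  Then `λ₁^L(Σ \ Ω) < 0`. -/
theorem stmt_6
    (v Q : ℝ → ℝ) (hv_cont : ContinuousOn v (Set.Ioi (0 : ℝ)))
    (hv_pos : ∀ t > (0 : ℝ), 0 < v t)
    (hQ_cont : ContinuousOn Q (Set.Ioi (0 : ℝ))) (hQ_nonneg : ∀ t, 0 ≤ Q t)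
    (h_i : ∀ R > (0 : ℝ), ¬ IntegrableOn (fun t => 1 / v t) (Set.Ioi R))
    (h_ii : ∀ R > (0 : ℝ), ¬ IntegrableOn (fun t => Q t * v t) (Set.Ioi R))
    (T : ℝ) (hT : 0 < T)
    (lam1 : ℝ)
    (hlam_upper : ∀ g g' : ℝ → ℝ, (∀ t, HasDerivAt g (g' t) t) →
      HasCompactSupport g → (∀ t ≤ T, g t = 0) →
      (0 < ∫ t in Set.Ioi T, (g t) ^ 2 * v t) →
      lam1 * (∫ t in Set.Ioi T, (g t) ^ 2 * v t) ≤
        ∫ t in Set.Ioi T, ((g' t) ^ 2 - Q t * (g t) ^ 2) * v t) :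
    lam1 < 0 := by
  classical
  -- modified weight, continuous and positive on all of ℝ
  set w : ℝ → ℝ := fun t => v (max t T) with hw_def
  have hw_cont : Continuous w := by
    rw [continuous_iff_continuousAt]
    intro t
    have h1 : ContinuousAt v (max t T) :=
      hv_cont.continuousAt (Ioi_mem_nhds (lt_of_lt_of_le hT (le_max_right t T)))
    have h2 : Continuous fun t : ℝ => max t T := continuous_id.max continuous_const
    exact ContinuousAt.comp h1 h2.continuousAt
  have hw_pos : ∀ t, 0 < w t := fun t =>
    hv_pos _ (lt_of_lt_of_le hT (le_max_right t T))
  set u : ℝ → ℝ := fun t => (w t)⁻¹ with hu_def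
  have hu_cont : Continuous u := hw_cont.inv₀ fun t => (hw_pos t).ne'
  have hu_pos : ∀ t, 0 < u t := fun t => inv_pos.2 (hw_pos t)
  set a : ℝ := T + 1 with ha_def
  have haT : T < a := by simp [ha_def]
  -- primitive of u
  set h : ℝ → ℝ := fun t => ∫ s in a..t, u s with hh_def
  have hh : ∀ t, HasDerivAt h (u t) t := fun t =>
    (hu_cont.integral_hasStrictDerivAt a t).hasDerivAt
  have hh_cont : Continuous h := by
    rw [continuous_iff_continuousAt]; exact fun t => (hh t).continuousAt
  have hmono : Monotone h := by
    intro s t hst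
    have h1 : h t - h s = ∫ x in s..t, u x := by
      rw [hh_def]
      have := intervalIntegral.integral_add_adjacent_intervals
        (hu_cont.intervalIntegrable (μ := volume) a s)
        (hu_cont.intervalIntegrable (μ := volume) s t)
      simp only []
      linarith [this]
    nlinarith [intervalIntegral.integral_nonneg (μ := volume) hst
      (fun x _ => (hu_pos x).le), h1]
  have ha0 : h a = 0 := intervalIntegral.integral_same
  -- h is unbounded above
  have hub : ∀ C : ℝ, ∃ t, C ≤ h t := by
    by_contra hc
    push_neg at hc
    obtain ⟨C, hC⟩ := hc
    have hint : IntegrableOn u (Set.Ioi a) := by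
      have hfi : ∀ i : ℝ, IntegrableOn u (Set.Ioc a i) volume :=
        fun i => (hu_cont.integrableOn_Icc).mono_set Set.Ioc_subset_Icc_self
      apply integrableOn_Ioi_of_intervalIntegral_norm_bounded C a hfi Filter.tendsto_id
      filter_upwards [Filter.eventually_ge_atTop a] with i hi
      have : (∫ x in a..i, ‖u x‖) = h i := by
        apply intervalIntegral.integral_congr
        intro x _
        exact Real.norm_of_nonneg (hu_pos x).le
      show (∫ x in a..i, ‖u x‖) ≤ C
      rw [this]
      exact (hC i).le
    have : IntegrableOn (fun t => 1 / v t) (Set.Ioi a) := by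
      apply hint.congr_fun _ measurableSet_Ioi
      intro x hx
      have hxT : T ≤ x := le_trans haT.le (le_of_lt hx)
      simp [hu_def, hw_def, max_eq_left hxT, one_div]
    exact h_i a (lt_trans hT haT) this
  -- the basic cost constant
  set C₀ : ℝ := 2 * ∫ s in (0:ℝ)..1, (deriv Real.smoothTransition s)^2 with hC₀_def
  have hC₀_nonneg : 0 ≤ C₀ := by
    have := intervalIntegral.integral_nonneg (μ := volume)
      (f := fun s => (deriv Real.smoothTransition s)^2) zero_le_one (fun x _ => sq_nonneg _)
    rw [hC₀_def]; linarith
  -- choose b1 with h b1 ≥ 1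
  obtain ⟨t₁, ht₁⟩ := hub 1
  set b1 : ℝ := max t₁ (a + 1) with hb1_def
  have hb1a : a + 1 ≤ b1 := le_max_right _ _
  have hb1_pos : 0 < b1 := by simp only [ha_def] at hb1a; linarith
  have hb1T : T < b1 := by simp only [ha_def] at hb1a; linarith
  have hhb1 : 1 ≤ h b1 := le_trans ht₁ (hmono (le_max_left _ _))
  -- choose b2 with a large potential integral
  have hQv : ∃ b, b1 ≤ b ∧ C₀ < ∫ t in b1..b, Q t * v t := by
    by_contra hc
    push_neg at hc
    have hint : IntegrableOn (fun t => Q t * v t) (Set.Ioi b1) := by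
      have hQvc : ContinuousOn (fun t => Q t * v t) (Set.Ioi 0) := hQ_cont.mul hv_cont
      have hfi : ∀ i : ℝ, IntegrableOn (fun t => Q t * v t) (Set.Ioc b1 i) volume := by
        intro i
        have hsub : Set.Icc b1 i ⊆ Set.Ioi 0 := fun x hx => lt_of_lt_of_le hb1_pos hx.1
        exact ((hQvc.mono hsub).integrableOn_Icc).mono_set Set.Ioc_subset_Icc_self
      apply integrableOn_Ioi_of_intervalIntegral_norm_bounded C₀ b1 hfi Filter.tendsto_id
      filter_upwards [Filter.eventually_ge_atTop b1] with i hi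
      have heq : (∫ x in b1..i, ‖Q x * v x‖) = ∫ x in b1..i, Q x * v x := by
        apply intervalIntegral.integral_congr
        intro x hx
        rw [Set.uIcc_of_le hi] at hx
        exact Real.norm_of_nonneg
          (mul_nonneg (hQ_nonneg x) (hv_pos x (lt_of_lt_of_le hb1_pos hx.1)).le)
      show (∫ x in b1..i, ‖Q x * v x‖) ≤ C₀
      rw [heq]
      exact hc i hi
    exact h_ii b1 hb1_pos hint
  obtain ⟨b2, hb12, hQvb⟩ := hQv
  have hb12' : b1 < b2 := by
    rcases lt_or_eq_of_le hb12 with h' | h'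
    · exact h'
    · exfalso
      rw [← h', intervalIntegral.integral_same] at hQvb
      linarith
  set N : ℝ := h b2 with hN_def
  have hN1 : 1 ≤ N := le_trans hhb1 (hmono hb12)
  -- choose b3 with h b3 ≥ N + 1
  obtain ⟨t₃, ht₃⟩ := hub (N + 1)
  set b3 : ℝ := max t₃ b2 with hb3_def
  have hb23 : b2 ≤ b3 := le_max_right _ _
  have hhb3 : N + 1 ≤ h b3 := le_trans ht₃ (hmono (le_max_left _ _))
  have hTb3 : T ≤ b3 := by linarith
  have hhT : h T ≤ 0 := by rw [← ha0]; exact hmono haT.le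
  -- the test function
  set g : ℝ → ℝ := fun t =>
    Real.smoothTransition (h t) - Real.smoothTransition (h t - N) with hg_def
  set g' : ℝ → ℝ := fun t =>
    (deriv Real.smoothTransition (h t) - deriv Real.smoothTransition (h t - N)) * u t
    with hg'_def
  have hψd : Differentiable ℝ Real.smoothTransition :=
    (Real.smoothTransition.contDiff (n := 1)).differentiable one_ne_zero
  have hgd : ∀ t, HasDerivAt g (g' t) t := by
    intro t
    have d1 : HasDerivAt (fun t => Real.smoothTransition (h t))
        (deriv Real.smoothTransition (h t) * u t) t :=
      (hψd (h t)).hasDerivAt.comp t (hh t)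
    have d2 : HasDerivAt (fun t => Real.smoothTransition (h t - N))
        (deriv Real.smoothTransition (h t - N) * u t) t := by
      have inner : HasDerivAt (fun t => h t - N) (u t) t := (hh t).sub_const N
      exact (hψd (h t - N)).hasDerivAt.comp t inner
    have := d1.sub d2
    exact this.congr_deriv (by simp only [hg'_def]; ring)
  have hg_cont : Continuous g := by
    rw [continuous_iff_continuousAt]; exact fun t => (hgd t).continuousAt
  have hg'_cont : Continuous g' := by
    rw [hg'_def]
    exact (((psiDeriv_cont.comp hh_cont).sub
      (psiDeriv_cont.comp (hh_cont.sub continuous_const))).mul hu_cont)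
  -- vanishing facts
  have hg_zero_left : ∀ t, h t ≤ 0 → g t = 0 := by
    intro t ht'
    have h1 : Real.smoothTransition (h t) = 0 := Real.smoothTransition.zero_of_nonpos ht'
    have h2 : Real.smoothTransition (h t - N) = 0 :=
      Real.smoothTransition.zero_of_nonpos (by linarith)
    simp [hg_def, h1, h2]
  have hgT : ∀ t ≤ T, g t = 0 := fun t htT =>
    hg_zero_left t (le_trans (hmono htT) hhT)
  have hg_zero_right : ∀ t, b3 ≤ t → g t = 0 := by
    intro t ht'
    have hht : N + 1 ≤ h t := le_trans hhb3 (hmono ht')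
    have h1 : Real.smoothTransition (h t) = 1 :=
      Real.smoothTransition.one_of_one_le (by linarith)
    have h2 : Real.smoothTransition (h t - N) = 1 :=
      Real.smoothTransition.one_of_one_le (by linarith)
    simp [hg_def, h1, h2]
  have hg'_zero_right : ∀ t, b3 ≤ t → g' t = 0 := by
    intro t ht'
    have hht : N + 1 ≤ h t := le_trans hhb3 (hmono ht')
    have h1 : deriv Real.smoothTransition (h t) = 0 := psiDeriv_one_le (by linarith)
    have h2 : deriv Real.smoothTransition (h t - N) = 0 := psiDeriv_one_le (by linarith)
    simp [hg'_def, h1, h2]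
  have hg_one : ∀ t ∈ Set.Icc b1 b2, g t = 1 := by
    intro t ht'
    have h1 : Real.smoothTransition (h t) = 1 :=
      Real.smoothTransition.one_of_one_le (le_trans hhb1 (hmono ht'.1))
    have h2 : Real.smoothTransition (h t - N) = 0 :=
      Real.smoothTransition.zero_of_nonpos (by linarith [hmono ht'.2])
    simp [hg_def, h1, h2]
  have hg_supp : HasCompactSupport g := by
    apply HasCompactSupport.intro (isCompact_Icc (a := a) (b := b3))
    intro x hx
    simp only [Set.mem_Icc, not_and_or, not_le] at hx
    rcases hx with hx | hx
    · exact hg_zero_left x (by rw [← ha0]; exact hmono hx.le)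
    · exact hg_zero_right x hx.le
  -- generic integration helper
  have key : ∀ F : ℝ → ℝ, ContinuousOn F (Set.Ioi 0) → (∀ t, b3 ≤ t → F t = 0) →
      IntegrableOn F (Set.Ioi T) ∧ (∫ t in Set.Ioi T, F t) = ∫ t in T..b3, F t := by
    intro F hFc hF0
    have hIcc : Set.Icc T b3 ⊆ Set.Ioi 0 := fun x hx => lt_of_lt_of_le hT hx.1
    have hint1 : IntegrableOn F (Set.Ioc T b3) :=
      ((hFc.mono hIcc).integrableOn_Icc).mono_set Set.Ioc_subset_Icc_self
    have hEq0 : Set.EqOn (fun _ : ℝ => (0:ℝ)) F (Set.Ioi b3) :=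
      fun x hx => (hF0 x (le_of_lt hx)).symm
    have hint2 : IntegrableOn F (Set.Ioi b3) :=
      (integrableOn_zero).congr_fun hEq0 measurableSet_Ioi
    have hunion : Set.Ioc T b3 ∪ Set.Ioi b3 = Set.Ioi T := Set.Ioc_union_Ioi_eq_Ioi hTb3
    constructor
    · rw [← hunion]; exact hint1.union hint2
    · rw [← hunion, setIntegral_union (Set.Ioc_disjoint_Ioi le_rfl) measurableSet_Ioi
        hint1 hint2]
      have hzero : (∫ t in Set.Ioi b3, F t) = 0 := by
        rw [setIntegral_congr_fun measurableSet_Ioi hEq0.symm]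
        simp
      rw [hzero, intervalIntegral.integral_of_le hTb3]
      ring
  -- the three integrands
  have hF1c : ContinuousOn (fun t => g t ^ 2 * v t) (Set.Ioi 0) :=
    ((hg_cont.pow 2).continuousOn).mul hv_cont
  have hF1z : ∀ t, b3 ≤ t → g t ^ 2 * v t = 0 := by
    intro t ht'; rw [hg_zero_right t ht']; ring
  have hF2c : ContinuousOn (fun t => Q t * g t ^ 2 * v t) (Set.Ioi 0) :=
    (hQ_cont.mul ((hg_cont.pow 2).continuousOn)).mul hv_cont
  have hF2z : ∀ t, b3 ≤ t → Q t * g t ^ 2 * v t = 0 := by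
    intro t ht'; rw [hg_zero_right t ht']; ring
  have hF3c : ContinuousOn (fun t => g' t ^ 2 * v t) (Set.Ioi 0) :=
    ((hg'_cont.pow 2).continuousOn).mul hv_cont
  have hF3z : ∀ t, b3 ≤ t → g' t ^ 2 * v t = 0 := by
    intro t ht'; rw [hg'_zero_right t ht']; ring
  obtain ⟨hM_int, -⟩ := key _ hF1c hF1z
  obtain ⟨hP_int, -⟩ := key _ hF2c hF2z
  obtain ⟨hK_int, -⟩ := key _ hF3c hF3z
  -- positivity of the mass
  have hIocT : Set.Ioc b1 b2 ⊆ Set.Ioi T := fun x hx => lt_trans hb1T hx.1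
  have hM_pos : 0 < ∫ t in Set.Ioi T, g t ^ 2 * v t := by
    have h1 : (∫ t in Set.Ioc b1 b2, g t ^ 2 * v t) ≤ ∫ t in Set.Ioi T, g t ^ 2 * v t := by
      apply setIntegral_mono_set hM_int
      · filter_upwards [self_mem_ae_restrict measurableSet_Ioi] with x hx
        exact mul_nonneg (sq_nonneg _) (hv_pos x (lt_trans hT hx)).le
      · exact HasSubset.Subset.eventuallyLE hIocT
    have h2 : (∫ t in Set.Ioc b1 b2, g t ^ 2 * v t) = ∫ t in Set.Ioc b1 b2, v t := by
      apply setIntegral_congr_fun measurableSet_Ioc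
      intro x hx
      show g x ^ 2 * v x = v x
      rw [hg_one x ⟨hx.1.le, hx.2⟩]
      ring
    have h3 : 0 < ∫ t in b1..b2, v t := by
      apply intervalIntegral.intervalIntegral_pos_of_pos_on
      · apply ContinuousOn.intervalIntegrable
        rw [Set.uIcc_of_le hb12]
        exact hv_cont.mono fun x hx => lt_of_lt_of_le hb1_pos hx.1
      · exact fun x hx => hv_pos x (lt_trans hb1_pos hx.1)
      · exact hb12'
    rw [intervalIntegral.integral_of_le hb12] at h3
    linarith
  -- lower bound for the potential term
  have hP_lb : (∫ t in b1..b2, Q t * v t) ≤ ∫ t in Set.Ioi T, Q t * g t ^ 2 * v t := by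
    have h1 : (∫ t in Set.Ioc b1 b2, Q t * g t ^ 2 * v t)
        ≤ ∫ t in Set.Ioi T, Q t * g t ^ 2 * v t := by
      apply setIntegral_mono_set hP_int
      · filter_upwards [self_mem_ae_restrict measurableSet_Ioi] with x hx
        exact mul_nonneg (mul_nonneg (hQ_nonneg x) (sq_nonneg _))
          (hv_pos x (lt_trans hT hx)).le
      · exact HasSubset.Subset.eventuallyLE hIocT
    have h2 : (∫ t in Set.Ioc b1 b2, Q t * g t ^ 2 * v t)
        = ∫ t in Set.Ioc b1 b2, Q t * v t := by
      apply setIntegral_congr_fun measurableSet_Ioc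
      intro x hx
      show Q x * g x ^ 2 * v x = Q x * v x
      rw [hg_one x ⟨hx.1.le, hx.2⟩]
      ring
    rw [intervalIntegral.integral_of_le hb12]
    linarith [h1, h2]
  -- computation of the gradient term
  have hK_eq : (∫ t in Set.Ioi T, g' t ^ 2 * v t) = C₀ := by
    -- first rewrite the integrand on Ioi T
    have step1 : (∫ t in Set.Ioi T, g' t ^ 2 * v t)
        = ∫ t in Set.Ioi T, (deriv Real.smoothTransition (h t)
            - deriv Real.smoothTransition (h t - N)) ^ 2 * u t := by
      apply setIntegral_congr_fun measurableSet_Ioi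
      intro x hx
      have hxT : T ≤ x := (le_of_lt hx)
      have hwv : v x = w x := by simp [hw_def, max_eq_left hxT]
      have hne : w x ≠ 0 := (hw_pos x).ne'
      show ((deriv Real.smoothTransition (h x) - deriv Real.smoothTransition (h x - N)) * u x) ^ 2
            * v x
          = (deriv Real.smoothTransition (h x) - deriv Real.smoothTransition (h x - N)) ^ 2 * u x
      rw [hwv]
      show ((deriv Real.smoothTransition (h x) - deriv Real.smoothTransition (h x - N)) * (w x)⁻¹) ^ 2
            * w x
          = (deriv Real.smoothTransition (h x) - deriv Real.smoothTransition (h x - N)) ^ 2 * (w x)⁻¹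
      field_simp
    have hF4c : Continuous (fun t =>
        (deriv Real.smoothTransition (h t) - deriv Real.smoothTransition (h t - N)) ^ 2 * u t) :=
      (((psiDeriv_cont.comp hh_cont).sub
        (psiDeriv_cont.comp (hh_cont.sub continuous_const))).pow 2).mul hu_cont
    have hF4z : ∀ t, b3 ≤ t →
        (deriv Real.smoothTransition (h t) - deriv Real.smoothTransition (h t - N)) ^ 2 * u t
          = 0 := by
      intro t ht'
      have hht : N + 1 ≤ h t := le_trans hhb3 (hmono ht')
      rw [psiDeriv_one_le (by linarith : (1:ℝ) ≤ h t),
        psiDeriv_one_le (by linarith : (1:ℝ) ≤ h t - N)]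
      ring
    obtain ⟨-, step2⟩ := key _ hF4c.continuousOn hF4z
    -- change of variables
    have step3 : (∫ t in T..b3,
        (deriv Real.smoothTransition (h t) - deriv Real.smoothTransition (h t - N)) ^ 2 * u t)
        = ∫ s in h T..h b3,
            (deriv Real.smoothTransition s - deriv Real.smoothTransition (s - N)) ^ 2 := by
      have hgq : Continuous (fun s =>
          (deriv Real.smoothTransition s - deriv Real.smoothTransition (s - N)) ^ 2) :=
        ((psiDeriv_cont.sub (psiDeriv_cont.comp (continuous_id.sub continuous_const))).pow 2)
      have := intervalIntegral.integral_comp_smul_deriv (a := T) (b := b3)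
        (f := h) (f' := u)
        (g := fun s => (deriv Real.smoothTransition s - deriv Real.smoothTransition (s - N)) ^ 2)
        (fun x _ => hh x) hu_cont.continuousOn hgq
      rw [← this]
      apply intervalIntegral.integral_congr
      intro x _
      simp [mul_comm]
    -- pointwise splitting of the square
    have hprod : ∀ s : ℝ,
        deriv Real.smoothTransition s * deriv Real.smoothTransition (s - N) = 0 := by
      intro s
      by_cases hs : s ≤ N
      · rw [psiDeriv_nonpos (by linarith : s - N ≤ 0)]; ring
      · rw [psiDeriv_one_le (by linarith : (1:ℝ) ≤ s)]; ring
    have step4 : (∫ s in h T..h b3,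
        (deriv Real.smoothTransition s - deriv Real.smoothTransition (s - N)) ^ 2)
        = (∫ s in h T..h b3, (deriv Real.smoothTransition s) ^ 2)
          + ∫ s in h T..h b3, (deriv Real.smoothTransition (s - N)) ^ 2 := by
      have hcong : Set.EqOn
          (fun s => (deriv Real.smoothTransition s - deriv Real.smoothTransition (s - N)) ^ 2)
          (fun s => (deriv Real.smoothTransition s) ^ 2
            + (deriv Real.smoothTransition (s - N)) ^ 2) (Set.uIcc (h T) (h b3)) := by
        intro s _
        have := hprod s
        simp only []
        nlinarith [this]
      rw [intervalIntegral.integral_congr hcong]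
      exact intervalIntegral.integral_add
        ((psiDeriv_cont.pow 2).intervalIntegrable _ _)
        (((psiDeriv_cont.comp (continuous_id.sub continuous_const)).pow 2).intervalIntegrable _ _)
    have hhb3' : (1:ℝ) ≤ h b3 := by linarith
    have step5 : (∫ s in h T..h b3, (deriv Real.smoothTransition s) ^ 2)
        = ∫ s in (0:ℝ)..1, (deriv Real.smoothTransition s) ^ 2 :=
      psi_sq_integral _ _ hhT hhb3'
    have step6 : (∫ s in h T..h b3, (deriv Real.smoothTransition (s - N)) ^ 2)
        = ∫ s in (0:ℝ)..1, (deriv Real.smoothTransition s) ^ 2 := by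
      rw [intervalIntegral.integral_comp_sub_right (fun s => (deriv Real.smoothTransition s) ^ 2) N]
      exact psi_sq_integral _ _ (by linarith) (by linarith)
    rw [step1, step2, step3, step4, step5, step6, hC₀_def]
    ring
  -- final assembly
  have hI : (∫ t in Set.Ioi T, (g' t ^ 2 - Q t * g t ^ 2) * v t)
      = (∫ t in Set.Ioi T, g' t ^ 2 * v t) - ∫ t in Set.Ioi T, Q t * g t ^ 2 * v t := by
    rw [← integral_sub hK_int hP_int]
    apply setIntegral_congr_fun measurableSet_Ioi
    intro x _
    show (g' x ^ 2 - Q x * g x ^ 2) * v x = g' x ^ 2 * v x - Q x * g x ^ 2 * v x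
    ring
  have hmain := hlam_upper g g' hgd hg_supp hgT hM_pos
  rw [hI, hK_eq] at hmain
  by_contra hl
  push_neg at hl
  have h0 : 0 ≤ lam1 * ∫ t in Set.Ioi T, g t ^ 2 * v t := mul_nonneg hl hM_pos.le
  linarith
end

section
/- Let M_f be a complete weighted Riemannian manifold with Ric̄_f ≥ 0, and let Σ be a complete f-parabolic L_f-stable f-minimal hypersurface immersed in M_f. Then Σ is totally geodesic and Ric̄_f(ν,ν) ≡ 0 along Σ. -/
/-- Let `M_f` be a complete weighted manifold with `Ric̄_f ≥ 0`, and let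
`Sg` be a complete `f`-parabolic, `L_f`-stable, `f`-minimal hypersurface immersed in
`M_f`.  Then `Sg` is totally geodesic (`|A|² ≡ 0`) and `Ric̄_f(ν,ν) ≡ 0` along `Sg`.
Abstraction as in Statement 7: `Δf` is the weighted Laplacian of `Sg`, `A2 = |A|² ≥ 0`,
`Ricfν = Ric̄_f(ν,ν) ≥ 0`; `f`-parabolicity is `hpar`; `L_f`-stability is encoded, via
the weighted Fischer-Colbrie–Schoen theorem, by a positive solution `u` of the Jacobi
equation `Δ_f u + (|A|² + Ric̄_f(ν,ν)) u = 0`. -/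
theorem stmt_8
    (Sg : Type*) [TopologicalSpace Sg] [Nonempty Sg]
    (Δf : (Sg → ℝ) → Sg → ℝ)
    (hconst : ∀ c : ℝ, ∀ x, Δf (fun _ => c) x = 0)
    (A2 Ricfν : Sg → ℝ) (hA2 : ∀ x, 0 ≤ A2 x)
    (hRic : ∀ x, 0 ≤ Ricfν x)
    -- f-parabolicity of the hypersurface:
    (hpar : ∀ u : Sg → ℝ, (∀ x, Δf u x ≤ 0) → BddBelow (Set.range u) →
      ∃ c : ℝ, u = fun _ => c)
    -- L_f-stability, via weighted Fischer-Colbrie–Schoen: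
    (u : Sg → ℝ) (hu_pos : ∀ x, 0 < u x)
    (hu_jacobi : ∀ x, Δf u x + (A2 x + Ricfν x) * u x = 0) :
    (∀ x, A2 x = 0) ∧ (∀ x, Ricfν x = 0) := by
  obtain ⟨c, hc⟩ := hpar u (fun x => by nlinarith [hu_jacobi x, hu_pos x, hA2 x, hRic x])
    ⟨0, fun y hy => by obtain ⟨x, rfl⟩ := hy; exact (hu_pos x).le⟩
  have hc0 : 0 < c := by have := hu_pos (Classical.arbitrary Sg); rw [hc] at this; exact this
  have key : ∀ x, A2 x + Ricfν x = 0 := by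
    intro x
    have hj := hu_jacobi x
    rw [hc] at hj
    rw [hconst c x] at hj
    nlinarith
  constructor
  · intro x
    have h1 := key x
    have h2 := hRic x
    have h3 := hA2 x
    linarith
  · intro x
    have h1 := key x
    have h2 := hRic x
    have h3 := hA2 x
    linarith
end
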